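/- arXiv:2003.00238 — 4 statements merged into one kernel-verified Lean document; each statement's English description precedes it below -/
import Mathlib

section
/- Let X and Y be real normed spaces with Y nontrivial, let U ⊆ X \ {0}, let L, ε > 0, and let u₁, …, u_N ∈ U be points whose projective-distance balls of radius ε/L do not cover U, i.e. there exists u* ∈ U with d(u*, u_i) > ε/L for all i = 1, …, N. Then for any f ∈ Y with ‖f‖ = 1, the operator H₁ : U → Y defined by H₁(u) = L·(min_{1≤i≤N} ‖u − u_i‖)·f is L-Lipschitz, satisfies H₁(u_i) = 0 for all i = 1, …, N, and satisfies ‖H₁(u*)‖ > ε·‖u*‖; in particular sup_{u ∈ U} ‖H₁(u)‖/‖u‖ > ε. -/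
/-- The projective distance on a real normed space:
`d(x,y) = ‖x - y‖ / max ‖x‖ ‖y‖`. -/
noncomputable def projDist {X : Type*} [NormedAddCommGroup X] (x y : X) : ℝ :=
  ‖x - y‖ / max ‖x‖ ‖y‖

/-- If the samples `u₁, …, u_N` fail to cover `U` by projective balls of radius `ε/L`,
then `H₁(u) = L · (minᵢ ‖u - uᵢ‖) · f` is an `L`-Lipschitz operator on `U` vanishing at all
samples whose `L₂`-gain exceeds `ε`. -/
theorem gain_estimation_lower_bound_witness {X Y : Type*}
    [NormedAddCommGroup X] [NormedSpace ℝ X] [NormedAddCommGroup Y] [NormedSpace ℝ Y]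
    (U : Set X) (hU : ∀ u ∈ U, u ≠ 0)
    (L ε : ℝ) (hL : 0 < L) (hε : 0 < ε)
    (N : ℕ) (hN : 0 < N) (u : Fin N → X) (hu : ∀ i, u i ∈ U)
    (ustar : X) (hstar : ustar ∈ U) (hfar : ∀ i, ε / L < projDist ustar (u i))
    (f : Y) (hf : ‖f‖ = 1) :
    let H₁ : X → Y := fun v => (L * ⨅ i, ‖v - u i‖) • f
    (∀ v ∈ U, ∀ w ∈ U, ‖H₁ v - H₁ w‖ ≤ L * ‖v - w‖) ∧
      (∀ i, H₁ (u i) = 0) ∧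
      ε * ‖ustar‖ < ‖H₁ ustar‖ ∧
      ∃ u' ∈ U, ε < ‖H₁ u'‖ / ‖u'‖ := by
  intro H₁
  have hNe : Nonempty (Fin N) := ⟨⟨0, hN⟩⟩
  have hbdd : ∀ v : X, BddBelow (Set.range fun i => ‖v - u i‖) := fun v =>
    ⟨0, by rintro x ⟨i, rfl⟩; exact norm_nonneg _⟩
  have hinf_nonneg : ∀ v : X, 0 ≤ ⨅ i, ‖v - u i‖ := fun v =>
    le_ciInf fun i => norm_nonneg _
  have key : ∀ v w : X, (⨅ i, ‖v - u i‖) ≤ (⨅ i, ‖w - u i‖) + ‖v - w‖ := by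
    intro v w
    rw [← sub_le_iff_le_add]
    refine le_ciInf fun i => ?_
    rw [sub_le_iff_le_add]
    calc ⨅ j, ‖v - u j‖ ≤ ‖v - u i‖ := ciInf_le (hbdd v) i
      _ ≤ ‖w - u i‖ + ‖v - w‖ := by
          have h := norm_add_le (v - w) (w - u i)
          rw [sub_add_sub_cancel] at h
          linarith
  have habs : ∀ v w : X, |(⨅ i, ‖v - u i‖) - (⨅ i, ‖w - u i‖)| ≤ ‖v - w‖ := by
    intro v w
    rw [abs_sub_le_iff]
    constructor
    · linarith [key v w]
    · have h := key w v
      rw [norm_sub_rev w v] at h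
      linarith
  have h3 : ε * ‖ustar‖ < ‖H₁ ustar‖ := by
    show ε * ‖ustar‖ < ‖(L * ⨅ i, ‖ustar - u i‖) • f‖
    have hsn : 0 < ‖ustar‖ := norm_pos_iff.mpr (hU _ hstar)
    have hlow : ∀ i, ε / L * ‖ustar‖ < ‖ustar - u i‖ := by
      intro i
      have h := hfar i
      unfold projDist at h
      have hmaxpos : 0 < max ‖ustar‖ ‖(u i)‖ := lt_of_lt_of_le hsn (le_max_left _ _)
      rw [lt_div_iff₀ hmaxpos] at h
      calc ε / L * ‖ustar‖ ≤ ε / L * max ‖ustar‖ ‖(u i)‖ :=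
            mul_le_mul_of_nonneg_left (le_max_left _ _) (by positivity)
        _ < ‖ustar - u i‖ := h
    obtain ⟨i, hi⟩ := exists_eq_ciInf_of_finite (f := fun i => ‖ustar - u i‖)
    have hinf : ε / L * ‖ustar‖ < ⨅ i, ‖ustar - u i‖ := hi ▸ hlow i
    rw [norm_smul, hf, mul_one]
    have hlt : ε * ‖ustar‖ < L * (⨅ i, ‖ustar - u i‖) := by
      have h2 := mul_lt_mul_of_pos_left hinf hL
      calc ε * ‖ustar‖ = L * (ε / L * ‖ustar‖) := by field_simp
        _ < L * ⨅ i, ‖ustar - u i‖ := h2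
    calc ε * ‖ustar‖ < L * ⨅ i, ‖ustar - u i‖ := hlt
      _ ≤ |L * ⨅ i, ‖ustar - u i‖| := le_abs_self _
  refine ⟨?_, ?_, h3, ?_⟩
  · intro v _ w _
    show ‖(L * ⨅ i, ‖v - u i‖) • f - (L * ⨅ i, ‖w - u i‖) • f‖ ≤ L * ‖v - w‖
    rw [← sub_smul, norm_smul, hf, mul_one, ← mul_sub]
    rw [Real.norm_eq_abs, abs_mul, abs_of_pos hL]
    exact mul_le_mul_of_nonneg_left (habs v w) hL.le
  · intro i
    show (L * ⨅ j, ‖u i - u j‖) • f = 0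
    have h1 : (⨅ j, ‖u i - u j‖) ≤ 0 := by
      simpa using ciInf_le (hbdd (u i)) i
    have h0 : (⨅ j, ‖u i - u j‖) = 0 := le_antisymm h1 (hinf_nonneg _)
    simp [h0]
  · refine ⟨ustar, hstar, ?_⟩
    have hsn : 0 < ‖ustar‖ := norm_pos_iff.mpr (hU _ hstar)
    rw [lt_div_iff₀ hsn]
    exact h3
end

section
/- Let X be a real normed space and let v₁, …, v_N ∈ X \ {0} be N pairwise distinct points. Set η = min_{i≠j} ‖v_i − v_j‖/(‖v_i‖ + ‖v_j‖) and let 0 < δ < η/(η+1). Then no projective-distance ball of radius δ contains two of the points: there is no nonzero x ∈ X and no pair i ≠ j with d(x, v_i) ≤ δ and d(x, v_j) ≤ δ. -/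
/-- If `η = min_{i ≠ j} ‖vᵢ - vⱼ‖ / (‖vᵢ‖ + ‖vⱼ‖)` and `0 < δ < η/(η+1)`, then no
projective ball of radius `δ` contains two of the (pairwise distinct, nonzero) points `vᵢ`. -/
theorem no_two_points_in_small_projective_ball {X : Type*}
    [NormedAddCommGroup X] [NormedSpace ℝ X]
    (N : ℕ) (v : Fin N → X) (hv : ∀ i, v i ≠ 0)
    (hdistinct : ∀ i j, i ≠ j → v i ≠ v j)
    (η : ℝ)
    (hη : η = ⨅ p : {p : Fin N × Fin N // p.1 ≠ p.2},
      ‖v p.val.1 - v p.val.2‖ / (‖v p.val.1‖ + ‖v p.val.2‖))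
    (δ : ℝ) (hδ : 0 < δ) (hδη : δ < η / (η + 1)) :
    ¬ ∃ x : X, x ≠ 0 ∧ ∃ i j, i ≠ j ∧ projDist x (v i) ≤ δ ∧ projDist x (v j) ≤ δ := by
  rintro ⟨x, hx, i, j, hij, hi, hj⟩
  haveI : Nonempty {p : Fin N × Fin N // p.1 ≠ p.2} := ⟨⟨(i, j), hij⟩⟩
  have hpos : ∀ a : X, a ≠ 0 → (0:ℝ) < ‖a‖ := fun a ha => norm_pos_iff.mpr ha
  have hη0 : 0 ≤ η := by
    rw [hη]
    apply le_ciInf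
    intro p
    have h1 := hpos _ (hv p.val.1)
    have h2 := hpos _ (hv p.val.2)
    positivity
  have hδ1 : δ < 1 := lt_of_lt_of_le hδη (by
    rw [div_le_one (by linarith)]; linarith)
  have key : ∀ a : X, a ≠ 0 → projDist x a ≤ δ → max ‖x‖ ‖a‖ ≤ ‖a‖ / (1 - δ) := by
    intro a ha h
    have hm : (0:ℝ) < max ‖x‖ ‖a‖ := lt_max_of_lt_right (hpos a ha)
    rw [projDist, div_le_iff₀ hm] at h
    have htri : ‖x‖ - ‖a‖ ≤ ‖x - a‖ := norm_sub_norm_le x a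
    rcases max_cases ‖x‖ ‖a‖ with ⟨he, hge⟩ | ⟨he, hlt⟩ <;>
      rw [he] at h ⊢ <;> rw [le_div_iff₀ (by linarith)] <;>
      nlinarith [norm_nonneg a, norm_nonneg (x - a)]
  have hi' := key (v i) (hv i) hi
  have hj' := key (v j) (hv j) hj
  have hmi : (0:ℝ) < max ‖x‖ ‖v i‖ := lt_max_of_lt_right (hpos _ (hv i))
  have hmj : (0:ℝ) < max ‖x‖ ‖v j‖ := lt_max_of_lt_right (hpos _ (hv j))
  have hi2 : ‖x - v i‖ ≤ δ * max ‖x‖ ‖v i‖ := by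
    rw [projDist, div_le_iff₀ hmi] at hi; exact hi
  have hj2 : ‖x - v j‖ ≤ δ * max ‖x‖ ‖v j‖ := by
    rw [projDist, div_le_iff₀ hmj] at hj; exact hj
  have htri : ‖v i - v j‖ ≤ ‖x - v i‖ + ‖x - v j‖ := by
    have := norm_sub_le (x - v i) (x - v j)
    simpa [sub_sub_sub_cancel_left] using (norm_sub_le (v i - x) (v j - x)).trans_eq (by
      rw [norm_sub_rev (v i) x, norm_sub_rev (v j) x]) |>.trans_eq rfl
  have hsum : (0:ℝ) < ‖v i‖ + ‖v j‖ := by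
    have := hpos _ (hv i); have := hpos _ (hv j); linarith
  have hratio : ‖v i - v j‖ / (‖v i‖ + ‖v j‖) ≤ δ / (1 - δ) := by
    rw [div_le_div_iff₀ hsum (by linarith)]
    have h1 : ‖v i - v j‖ ≤ δ * (‖v i‖ / (1 - δ)) + δ * (‖v j‖ / (1 - δ)) := by
      calc ‖v i - v j‖ ≤ ‖x - v i‖ + ‖x - v j‖ := htri
        _ ≤ δ * max ‖x‖ ‖v i‖ + δ * max ‖x‖ ‖v j‖ := by linarith
        _ ≤ δ * (‖v i‖ / (1 - δ)) + δ * (‖v j‖ / (1 - δ)) := by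
            have := mul_le_mul_of_nonneg_left hi' hδ.le
            have := mul_le_mul_of_nonneg_left hj' hδ.le
            linarith
    have h2 : δ * (‖v i‖ / (1 - δ)) + δ * (‖v j‖ / (1 - δ)) = δ * (‖v i‖ + ‖v j‖) / (1 - δ) := by
      field_simp
    have h3 : δ * (‖v i‖ + ‖v j‖) / (1 - δ) * (1 - δ) = δ * (‖v i‖ + ‖v j‖) :=
      div_mul_cancel₀ _ (by linarith)
    nlinarith [h1, h2, h3]
  have hle : η ≤ ‖v i - v j‖ / (‖v i‖ + ‖v j‖) := by
    rw [hη]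
    refine ciInf_le ⟨0, ?_⟩ (⟨(i, j), hij⟩ : {p : Fin N × Fin N // p.1 ≠ p.2})
    rintro y ⟨p, rfl⟩
    have h1 := hpos _ (hv p.val.1)
    have h2 := hpos _ (hv p.val.2)
    positivity
  have hlt : δ / (1 - δ) < η := by
    rw [div_lt_iff₀ (by linarith)]
    rw [lt_div_iff₀ (by linarith : (0:ℝ) < η + 1)] at hδη
    nlinarith
  linarith
end

section
/- Let X be a real inner product space, Y a real normed space, U ⊆ X \ {0} a symmetric set (u ∈ U if and only if −u ∈ U), and let u₀ ∈ U be a point minimizing the norm over U, i.e. ‖u₀‖ ≤ ‖v‖ for all v ∈ U. If H : U → Y is L-Lipschitz, then for every u′ ∈ U, ‖H(u′)‖/‖u′‖ ≤ max( ‖H(u₀)‖/‖u₀‖, ‖H(−u₀)‖/‖u₀‖ ) + √2·L. -/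
/-!
One of `u₀`, `-u₀` makes a nonnegative inner product with `u'`, and it is no longer than `u'`;
by the law of cosines it then lies within `√2 ‖u'‖` of `u'`. The Lipschitz bound transports the
gain at that sample to `u'` at the cost of `√2 L ‖u'‖`, and `‖u₀‖ ≤ ‖u'‖` lets the sampled gain
scale up to `‖u'‖`.
-/

open RealInnerProductSpace

section

variable {X : Type*} [NormedAddCommGroup X] [InnerProductSpace ℝ X]

theorem norm_sub_le_sqrt_two_mul_of_inner_nonneg {u w : X} (hinner : 0 ≤ ⟪u, w⟫)
    (hnorm : ‖w‖ ≤ ‖u‖) : ‖u - w‖ ≤ √2 * ‖u‖ := by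
  have hsq : ‖u - w‖ ^ 2 ≤ (√2 * ‖u‖) ^ 2 := by
    rw [norm_sub_sq_real, mul_pow, Real.sq_sqrt zero_le_two]
    nlinarith [norm_nonneg w]
  exact (pow_le_pow_iff_left₀ (norm_nonneg _) (by positivity) two_ne_zero).1 hsq

theorem norm_apply_le_of_lipschitz_of_inner_nonneg {Y : Type*} [SeminormedAddCommGroup Y]
    {H : X → Y} {L c : ℝ} (hL : 0 ≤ L) {u w : X} (hlip : ‖H u - H w‖ ≤ L * ‖u - w‖)
    (hinner : 0 ≤ ⟪u, w⟫) (hnorm : ‖w‖ ≤ ‖u‖) (hw : ‖H w‖ ≤ c * ‖u‖) :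
    ‖H u‖ ≤ (c + √2 * L) * ‖u‖ := by
  have hdist := norm_sub_le_sqrt_two_mul_of_inner_nonneg hinner hnorm
  calc ‖H u‖ ≤ ‖H w‖ + ‖H u - H w‖ := norm_le_insert' _ _
    _ ≤ c * ‖u‖ + L * (√2 * ‖u‖) := add_le_add hw (hlip.trans (by gcongr))
    _ = (c + √2 * L) * ‖u‖ := by ring

end

theorem gain_bound_from_two_samples_general {X Y : Type*}
    [NormedAddCommGroup X] [InnerProductSpace ℝ X] [NormedAddCommGroup Y]
    (U : Set X) (hU : ∀ u ∈ U, u ≠ 0) (hsymm : ∀ u ∈ U, -u ∈ U)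
    (u₀ : X) (hu₀ : u₀ ∈ U) (hmin : ∀ v ∈ U, ‖u₀‖ ≤ ‖v‖)
    (L : ℝ) (hL : 0 < L) (H : X → Y)
    (hHlip : ∀ v ∈ U, ∀ w ∈ U, ‖H v - H w‖ ≤ L * ‖v - w‖) :
    ∀ u' ∈ U, ‖H u'‖ / ‖u'‖ ≤ max (‖H u₀‖ / ‖u₀‖) (‖H (-u₀)‖ / ‖u₀‖) + Real.sqrt 2 * L := by
  intro u' hu'
  set m := max (‖H u₀‖ / ‖u₀‖) (‖H (-u₀)‖ / ‖u₀‖)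
  have hu₀_pos : 0 < ‖u₀‖ := norm_pos_iff.mpr (hU u₀ hu₀)
  have hm : 0 ≤ m := (div_nonneg (norm_nonneg _) hu₀_pos.le).trans (le_max_left _ _)
  have hsample : ∀ s, ‖H s‖ / ‖u₀‖ ≤ m → ‖H s‖ ≤ m * ‖u'‖ := fun s hs =>
    ((div_le_iff₀ hu₀_pos).1 hs).trans (mul_le_mul_of_nonneg_left (hmin u' hu') hm)
  rw [div_le_iff₀ (norm_pos_iff.mpr (hU u' hu'))]
  rcases le_total 0 ⟪u', u₀⟫ with hinner | hinner
  · exact norm_apply_le_of_lipschitz_of_inner_nonneg hL.le (hHlip u' hu' u₀ hu₀) hinner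
      (hmin u' hu') (hsample u₀ (le_max_left _ _))
  · exact norm_apply_le_of_lipschitz_of_inner_nonneg hL.le (hHlip u' hu' (-u₀) (hsymm u₀ hu₀))
      (by rwa [inner_neg_right, neg_nonneg]) (by rw [norm_neg]; exact hmin u' hu')
      (hsample (-u₀) (le_max_right _ _))

/-- For a symmetric set `U` of nonzero vectors in an inner product space, sampling at a
minimal-norm point `u₀` and at `-u₀` bounds the `L₂`-gain of any `L`-Lipschitz operator up
to an additive error `√2·L`. -/
theorem gain_bound_from_two_samples {X Y : Type*}
    [NormedAddCommGroup X] [InnerProductSpace ℝ X] [NormedAddCommGroup Y] [NormedSpace ℝ Y]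
    (U : Set X) (hU : ∀ u ∈ U, u ≠ 0) (hsymm : ∀ u ∈ U, -u ∈ U)
    (u₀ : X) (hu₀ : u₀ ∈ U) (hmin : ∀ v ∈ U, ‖u₀‖ ≤ ‖v‖)
    (L : ℝ) (hL : 0 < L) (H : X → Y)
    (hHlip : ∀ v ∈ U, ∀ w ∈ U, ‖H v - H w‖ ≤ L * ‖v - w‖) :
    ∀ u' ∈ U, ‖H u'‖ / ‖u'‖ ≤ max (‖H u₀‖ / ‖u₀‖) (‖H (-u₀)‖ / ‖u₀‖) + Real.sqrt 2 * L :=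
  gain_bound_from_two_samples_general U hU hsymm u₀ hu₀ hmin L hL H hHlip
end

section
/- Let H be a real Hilbert space, let F ⊆ H be a subspace of finite dimension n ≥ 1, and let U ⊆ F be a compact set not containing 0 whose interior relative to F is nonempty. For every c with 0 < c < 1 there exist constants K₁, K₂ > 0, depending only on U and c, such that for every η with 0 < η < c, the minimal number N_d(U, η) of projective-distance balls of radius η needed to cover U (i.e. the least N such that there exist nonzero x₁, …, x_N ∈ H with every u ∈ U satisfying d(u, x_i) ≤ η for some i) satisfies K₁·η^{−n} ≤ N_d(U, η) ≤ K₂·η^{−n}. -/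
open Metric MeasureTheory Set
open scoped ENNReal NNReal

set_option maxHeartbeats 1000000


/-- The minimal number of projective-distance balls of radius `η` (with nonzero centers)
needed to cover `U`. -/
noncomputable def projCoverIndex {X : Type*} [NormedAddCommGroup X]
    (U : Set X) (η : ℝ) : ℕ :=
  sInf {N : ℕ | ∃ x : Fin N → X, (∀ i, x i ≠ 0) ∧ ∀ u ∈ U, ∃ i, projDist u (x i) ≤ η}

/-- For a compact subset `U` (not containing `0`, with nonempty interior relative to an
`n`-dimensional subspace `F` of a real Hilbert space), the projective cover index satisfies
`K₁·η⁻ⁿ ≤ N_d(U,η) ≤ K₂·η⁻ⁿ` for all `0 < η < c`. -/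
theorem projective_cover_index_asymptotics {H : Type*}
    [NormedAddCommGroup H] [InnerProductSpace ℝ H]
    (F : Submodule ℝ H) [FiniteDimensional ℝ F]
    (n : ℕ) (hn : 1 ≤ n) (hF : Module.finrank ℝ F = n)
    (U : Set H) (hUF : U ⊆ (F : Set H)) (hcpt : IsCompact U) (h0 : (0 : H) ∉ U)
    (hint : (interior ((fun v : F => (v : H)) ⁻¹' U)).Nonempty)
    (c : ℝ) (hc0 : 0 < c) (hc1 : c < 1) :
    ∃ K₁ K₂ : ℝ, 0 < K₁ ∧ 0 < K₂ ∧ ∀ η : ℝ, 0 < η → η < c →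
      K₁ / η ^ n ≤ (projCoverIndex U η : ℝ) ∧ (projCoverIndex U η : ℝ) ≤ K₂ / η ^ n := by
    classical
  letI : MeasurableSpace F := borel F
  haveI : BorelSpace F := ⟨rfl⟩
  haveI : Nontrivial F := Module.nontrivial_of_finrank_pos (R := ℝ)
    (by omega : 0 < Module.finrank ℝ F)
  set μ : Measure F := (Module.finBasis ℝ F).addHaar with hμ
  set U' : Set F := (fun v : F => (v : H)) ⁻¹' U with hU'
  have hcl : IsClosed (F : Set H) := F.closed_of_finiteDimensional
  have hU'c : IsCompact U' := hcl.isClosedEmbedding_subtypeVal.isCompact_preimage hcpt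
  set B := μ (ball (0:F) 1) with hB
  have hB0 : B ≠ 0 := (measure_ball_pos μ 0 one_pos).ne'
  have hBtop : B ≠ ⊤ := measure_ball_lt_top.ne
  have hballμ : ∀ (x : F) (t : ℝ), 0 ≤ t →
      μ (ball x t) = ENNReal.ofReal (t ^ n) * B := by
    intro x t ht
    rw [hB, Measure.addHaar_ball μ x ht, hF]
  -- interior point
  obtain ⟨v₀, hv₀⟩ := hint
  obtain ⟨ρ, hρ0, hρball⟩ := Metric.mem_nhds_iff.mp (mem_interior_iff_mem_nhds.mp hv₀)
  -- U is nonempty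
  have hv₀U'0 : v₀ ∈ U' := interior_subset hv₀
  have hUne : U.Nonempty := ⟨(v₀ : H), hv₀U'0⟩
  -- min/max of the norm on U
  obtain ⟨u₀, hu₀U, hu₀min⟩ := hcpt.exists_isMinOn hUne continuous_norm.continuousOn
  obtain ⟨u₁, hu₁U, hu₁max⟩ := hcpt.exists_isMaxOn hUne continuous_norm.continuousOn
  set r : ℝ := ‖u₀‖ with hrdef
  set R : ℝ := ‖u₁‖ with hRdef
  have hr0 : 0 < r := norm_pos_iff.mpr (fun h => h0 (h ▸ hu₀U))
  have hrmin : ∀ u ∈ U, r ≤ ‖u‖ := fun u hu => hu₀min hu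
  have hRmax : ∀ u ∈ U, ‖u‖ ≤ R := fun u hu => hu₁max hu
  have hrR : r ≤ R := hRmax u₀ hu₀U
  have hR0 : 0 < R := lt_of_lt_of_le hr0 hrR
  set R' : ℝ := R / (1 - c) with hR'def
  have h1c : 0 < 1 - c := by linarith
  have hR'0 : 0 < R' := div_pos hR0 h1c
  have hRR' : R ≤ R' := by
    rw [hR'def, le_div_iff₀ h1c]; nlinarith
  -- norms in F
  have hnormF : ∀ x : F, ‖x‖ = ‖(x : H)‖ := fun x => rfl
  have hdistF : ∀ x y : F, dist x y = ‖(x : H) - (y : H)‖ := by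
    intro x y; rw [dist_eq_norm, hnormF]; norm_cast
  -- key bound on centers of useful projective balls
  have hcenter : ∀ η : ℝ, 0 < η → η < c → ∀ u ∈ U, ∀ x : H, projDist u x ≤ η →
      ‖u - x‖ ≤ η * R' := by
    intro η hη0 hηc u hu x hpd
    have hu0 : (0:ℝ) < ‖u‖ := lt_of_lt_of_le hr0 (hrmin u hu)
    have hmax : (0:ℝ) < max ‖u‖ ‖x‖ := lt_of_lt_of_le hu0 (le_max_left _ _)
    have hux : ‖u - x‖ ≤ η * max ‖u‖ ‖x‖ := by
      have := (div_le_iff₀ hmax).mp hpd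
      linarith [this]
    have hxb : max ‖u‖ ‖x‖ ≤ R' := by
      rcases le_total ‖x‖ ‖u‖ with h | h
      · rw [max_eq_left h]; exact le_trans (hRmax u hu) hRR'
      · rw [max_eq_right h]
        have h1 : ‖x‖ - ‖u‖ ≤ ‖u - x‖ := by
          have := norm_sub_norm_le x u
          rw [norm_sub_rev] at this; linarith [this]
        have h2 : ‖x‖ * (1 - η) ≤ R := by
          have := hRmax u hu
          rw [max_eq_right h] at hux
          nlinarith
        have h3 : ‖x‖ ≤ R / (1 - η) := by
          rw [le_div_iff₀ (by linarith : (0:ℝ) < 1 - η)]; linarith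
        calc ‖x‖ ≤ R / (1 - η) := h3
          _ ≤ R / (1 - c) := by
            apply div_le_div_of_nonneg_left hR0.le h1c; linarith
    calc ‖u - x‖ ≤ η * max ‖u‖ ‖x‖ := hux
      _ ≤ η * R' := by nlinarith
  -- the constants
  refine ⟨ρ ^ n / (3 * R') ^ n, (R + r / 2) ^ n / (r / 2) ^ n, ?_, ?_, ?_⟩
  · positivity
  · positivity
  intro η hη0 hηc
  have hη1 : η < 1 := lt_trans hηc hc1
  set S := {N : ℕ | ∃ x : Fin N → H, (∀ i, x i ≠ 0) ∧ ∀ u ∈ U, ∃ i, projDist u (x i) ≤ η}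
    with hS
  have hSdef : projCoverIndex U η = sInf S := rfl
  set ε : ℝ := r * η with hεdef
  have hε0 : 0 < ε := mul_pos hr0 hη0
  -- Part A: existence of a maximal separated set, giving the upper bound
  have cardBound : ∀ s : Finset F, (↑s : Set F) ⊆ U' →
      ((↑s : Set F).Pairwise fun a b => ε ≤ dist a b) →
      (s.card : ℝ) * (ε / 2) ^ n ≤ (R + r / 2) ^ n := by
    intro s hsU hsep
    have hdisj : (↑s : Set F).PairwiseDisjoint (fun a => ball a (ε / 2)) := by
      intro a ha b hb hab
      exact ball_disjoint_ball (by linarith [hsep ha hb hab])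
    have hsub : ∀ a ∈ s, ball a (ε / 2) ⊆ ball (0:F) (R + r / 2) := by
      intro a ha z hz
      have haU : (a : H) ∈ U := hsU ha
      have hna : ‖a‖ ≤ R := by rw [hnormF]; exact hRmax _ haU
      have hεr : ε / 2 ≤ r / 2 := by
        rw [hεdef]; nlinarith
      rw [mem_ball] at hz
      rw [mem_ball]
      calc dist z (0:F) ≤ dist z a + dist a 0 := dist_triangle _ _ _
        _ < ε / 2 + ‖a‖ := by rw [dist_zero_right]; linarith [hz]
        _ ≤ R + r / 2 := by linarith
    have hmeas : (s.card : ℝ≥0∞) * (ENNReal.ofReal ((ε / 2) ^ n) * B)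
        ≤ ENNReal.ofReal ((R + r / 2) ^ n) * B := by
      calc (s.card : ℝ≥0∞) * (ENNReal.ofReal ((ε / 2) ^ n) * B)
          = ∑ _a ∈ s, (ENNReal.ofReal ((ε / 2) ^ n) * B) := by
            rw [Finset.sum_const, nsmul_eq_mul]
        _ = ∑ a ∈ s, μ (ball a (ε / 2)) := by
            apply Finset.sum_congr rfl; intro a _
            rw [hballμ a (ε/2) (by positivity)]
        _ = μ (⋃ a ∈ s, ball a (ε / 2)) :=
            (measure_biUnion_finset hdisj (fun a _ => measurableSet_ball)).symm
        _ ≤ μ (ball (0:F) (R + r / 2)) := by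
            apply measure_mono
            exact Set.iUnion₂_subset hsub
        _ = ENNReal.ofReal ((R + r / 2) ^ n) * B := hballμ _ _ (by positivity)
    have hmeas2 : (s.card : ℝ≥0∞) * ENNReal.ofReal ((ε / 2) ^ n)
        ≤ ENNReal.ofReal ((R + r / 2) ^ n) := by
      have h' := hmeas
      rw [← mul_assoc] at h'
      exact (ENNReal.mul_le_mul_iff_left hB0 hBtop).mp h'
    have hof : ENNReal.ofReal ((s.card : ℝ) * (ε / 2) ^ n)
        ≤ ENNReal.ofReal ((R + r / 2) ^ n) := by
      rw [ENNReal.ofReal_mul (by positivity), ENNReal.ofReal_natCast]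
      exact hmeas2
    exact (ENNReal.ofReal_le_ofReal_iff (by positivity)).mp hof
  -- realize the cardinalities as a set of naturals with a maximum
  set A := {k : ℕ | ∃ s : Finset F, (↑s : Set F) ⊆ U' ∧
      ((↑s : Set F).Pairwise fun a b => ε ≤ dist a b) ∧ s.card = k} with hA
  have hA0 : (0:ℕ) ∈ A := ⟨∅, by simp, by simp, rfl⟩
  have hAbdd : BddAbove A := by
    refine ⟨Nat.ceil ((R + r / 2) ^ n / (ε / 2) ^ n), ?_⟩
    rintro k ⟨s, hsU, hsep, rfl⟩
    have h1 : (s.card : ℝ) ≤ (R + r / 2) ^ n / (ε / 2) ^ n := by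
      rw [le_div_iff₀ (by positivity)]
      exact cardBound s hsU hsep
    have h2 : (s.card : ℝ) ≤ (Nat.ceil ((R + r / 2) ^ n / (ε / 2) ^ n) : ℝ) :=
      h1.trans (Nat.le_ceil _)
    exact_mod_cast h2
  -- maximal separated set
  have hk₀ : sSup A ∈ A := Nat.sSup_mem ⟨0, hA0⟩ hAbdd
  obtain ⟨s₀, hs₀U, hs₀sep, hs₀card⟩ := hk₀
  -- s₀ is an ε-net of U'
  have hnet : ∀ u ∈ U', ∃ a ∈ s₀, dist u a < ε := by
    intro u hu
    by_contra hcon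
    push_neg at hcon
    have hunotin : u ∉ s₀ := fun h => absurd (hcon u h) (by simp [hε0])
    have hsep' : ((↑(insert u s₀) : Set F)).Pairwise fun a b => ε ≤ dist a b := by
      rw [Finset.coe_insert]
      apply Set.Pairwise.insert hs₀sep
      intro b hb hub
      constructor
      · exact hcon b hb
      · rw [dist_comm]; exact hcon b hb
    have hmem : (insert u s₀).card ∈ A := by
      refine ⟨insert u s₀, ?_, hsep', rfl⟩
      rw [Finset.coe_insert]
      exact Set.insert_subset hu hs₀U
    have := le_csSup hAbdd hmem
    rw [Finset.card_insert_of_notMem hunotin, hs₀card] at this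
    omega
  -- upper bound: s₀ gives a projective cover
  have hs₀mem : s₀.card ∈ S := by
    by_cases hs₀e : s₀.card = 0
    · -- then U' is empty, contradiction with v₀ ∈ U'
      exfalso
      have hv₀U' : v₀ ∈ U' := interior_subset hv₀
      obtain ⟨a, ha, -⟩ := hnet v₀ hv₀U'
      rw [Finset.card_eq_zero] at hs₀e
      simp [hs₀e] at ha
    · set e := Fintype.equivFinOfCardEq (Fintype.card_coe s₀) with he
      refine ⟨fun i => ((e.symm i : F) : H), ?_, ?_⟩
      · intro i hzero
        have hzero' : ((e.symm i : F) : H) = 0 := hzero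
        have : ((e.symm i : F) : H) ∈ U := hs₀U (e.symm i).2
        rw [hzero'] at this
        exact h0 this
      · intro u hu
        have huF : u ∈ (F : Set H) := hUF hu
        set u' : F := ⟨u, huF⟩ with hu'
        have hu'U' : u' ∈ U' := by
          rw [hU']; simpa using hu
        obtain ⟨a, ha, hda⟩ := hnet u' hu'U'
        refine ⟨e ⟨a, ha⟩, ?_⟩
        show projDist u (((e.symm (e ⟨a, ha⟩) : ↥s₀) : F) : H) ≤ η
        rw [Equiv.symm_apply_apply]
        have hnum : ‖u - (a : H)‖ < ε := by
          rw [← hdistF u' a]; exact hda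
        have hden : r ≤ max ‖u‖ ‖(a : H)‖ :=
          le_trans (hrmin u hu) (le_max_left _ _)
        have : projDist u (a : H) ≤ ε / r := by
          rw [projDist]
          exact div_le_div₀ hε0.le hnum.le hr0 hden
        calc projDist u (a:H) ≤ ε / r := this
          _ = η := by rw [hεdef]; field_simp
  have hupper : (projCoverIndex U η : ℝ) ≤ (R + r / 2) ^ n / (r / 2) ^ n / η ^ n := by
    have h1 : projCoverIndex U η ≤ s₀.card := Nat.sInf_le hs₀mem
    have h2 : (s₀.card : ℝ) ≤ (R + r / 2) ^ n / (ε / 2) ^ n := by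
      rw [le_div_iff₀ (by positivity)]
      exact cardBound s₀ hs₀U hs₀sep
    have h3 : (ε / 2) ^ n = (r / 2) ^ n * η ^ n := by
      rw [hεdef, ← mul_pow]; ring_nf
    calc (projCoverIndex U η : ℝ) ≤ (s₀.card : ℝ) := by exact_mod_cast h1
      _ ≤ (R + r / 2) ^ n / (ε / 2) ^ n := h2
      _ = (R + r / 2) ^ n / (r / 2) ^ n / η ^ n := by
          rw [h3, div_div]
  -- Part B: lower bound
  set N := projCoverIndex U η with hNdef
  have hNmem : N ∈ S := Nat.sInf_mem ⟨s₀.card, hs₀mem⟩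
  obtain ⟨x, hx0, hxcov⟩ := hNmem
  set δ : ℝ := 3 * R' * η with hδdef
  have hδ0 : 0 < δ := by positivity
  set w : Fin N → F := fun i =>
    if h : ∃ u' ∈ U', projDist ((u' : F) : H) (x i) ≤ η then h.choose else v₀ with hw
  have hcov2 : ball v₀ ρ ⊆ ⋃ i, ball (w i) δ := by
    intro z hz
    have hzU' : z ∈ U' := hρball hz
    have hzU : (z : H) ∈ U := hzU'
    obtain ⟨i, hi⟩ := hxcov (z : H) hzU
    have hex : ∃ u' ∈ U', projDist ((u' : F) : H) (x i) ≤ η := ⟨z, hzU', hi⟩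
    have hwi : w i = hex.choose := by rw [hw]; simp [hex]
    obtain ⟨hwU', hwpd⟩ := hex.choose_spec
    have h1 : ‖(z : H) - x i‖ ≤ η * R' := hcenter η hη0 hηc _ hzU _ hi
    have h2 : ‖((hex.choose : F) : H) - x i‖ ≤ η * R' :=
      hcenter η hη0 hηc _ hwU' _ hwpd
    refine Set.mem_iUnion.mpr ⟨i, ?_⟩
    rw [mem_ball, hwi, hdistF]
    calc ‖(z:H) - ((hex.choose : F) : H)‖
        ≤ ‖(z:H) - x i‖ + ‖x i - ((hex.choose : F) : H)‖ := by
          have := norm_sub_le_norm_sub_add_norm_sub (z:H) (x i) ((hex.choose : F) : H)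
          linarith [this]
      _ ≤ η * R' + η * R' := by
          rw [norm_sub_rev (x i)]
          linarith
      _ < δ := by rw [hδdef]; nlinarith
  have hmeasLB : ENNReal.ofReal (ρ ^ n) * B ≤ (N : ℝ≥0∞) * (ENNReal.ofReal (δ ^ n) * B) := by
    calc ENNReal.ofReal (ρ ^ n) * B = μ (ball v₀ ρ) := (hballμ _ _ hρ0.le).symm
      _ ≤ μ (⋃ i, ball (w i) δ) := measure_mono hcov2
      _ ≤ ∑ i : Fin N, μ (ball (w i) δ) := measure_iUnion_fintype_le μ _
      _ = (N : ℝ≥0∞) * (ENNReal.ofReal (δ ^ n) * B) := by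
          have : ∀ i : Fin N, μ (ball (w i) δ) = ENNReal.ofReal (δ ^ n) * B :=
            fun i => hballμ _ _ hδ0.le
          rw [Finset.sum_congr rfl (fun i _ => this i), Finset.sum_const,
            Finset.card_univ, Fintype.card_fin, nsmul_eq_mul]
  have hlow2 : ENNReal.ofReal (ρ ^ n) ≤ (N : ℝ≥0∞) * ENNReal.ofReal (δ ^ n) := by
    rw [← ENNReal.mul_le_mul_iff_left hB0 hBtop, mul_assoc]
    exact hmeasLB
  have hlow3 : ρ ^ n ≤ (N : ℝ) * δ ^ n := by
    have : ENNReal.ofReal (ρ ^ n) ≤ ENNReal.ofReal ((N : ℝ) * δ ^ n) := by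
      rw [ENNReal.ofReal_mul (by positivity), ENNReal.ofReal_natCast]
      exact hlow2
    exact (ENNReal.ofReal_le_ofReal_iff (by positivity)).mp this
  have hlower : ρ ^ n / (3 * R') ^ n / η ^ n ≤ (N : ℝ) := by
    rw [div_div, div_le_iff₀ (by positivity)]
    calc ρ ^ n ≤ (N : ℝ) * δ ^ n := hlow3
      _ = (N:ℝ) * ((3 * R') ^ n * η ^ n) := by rw [hδdef, ← mul_pow]
      _ = (N:ℝ) * ((3 * R') ^ n * η ^ n) := rfl
    
  exact ⟨hlower, hupper⟩
end
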